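/- arXiv:1608.05944 — 3 statements merged into one kernel-verified Lean document; each statement's English description precedes it below -/
import Mathlib

section
/- Let 0 < λ < 1, μ = √(1−λ²), a > 0, and define X : ℝ² → ℝ³ by X(u,v) = ( [cosh v·((a²+1)·cos u − (μ − aλ)·sin u·sinh(a u)·sin(a v) − (aμ + λ)·cos u·cosh(a u)·sin(a v)) + sinh v·cos(a v)·((aμ + λ)·sin u·sinh(a u) − (μ − aλ)·cos u·cosh(a u))]/(a²+1) , [cosh v·((a²+1)·sin u − (aμ + λ)·sin u·cosh(a u)·sin(a v) + (μ − aλ)·cos u·sinh(a u)·sin(a v)) − sinh v·cos(a v)·((aμ + λ)·cos u·sinh(a u) + (μ − aλ)·sin u·cosh(a u))]/(a²+1) , λ·u − sinh(a u)·sin(a v)/a ). Then each coordinate function of X is harmonic on ℝ², i.e. ∂²X_k/∂u² + ∂²X_k/∂v² = 0 for k = 1,2,3. -/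
open Real

/-- First coordinate of the helicoidal helicoid with timelike axis. -/
noncomputable def X1 (a lam mu u v : ℝ) : ℝ :=
  (cosh v * ((a^2 + 1) * cos u
      - (mu - a * lam) * sin u * sinh (a*u) * sin (a*v)
      - (a * mu + lam) * cos u * cosh (a*u) * sin (a*v))
   + sinh v * cos (a*v) * ((a * mu + lam) * sin u * sinh (a*u)
      - (mu - a * lam) * cos u * cosh (a*u))) / (a^2 + 1)

/-- Second coordinate of the helicoidal helicoid with timelike axis. -/
noncomputable def X2 (a lam mu u v : ℝ) : ℝ :=
  (cosh v * ((a^2 + 1) * sin u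
      - (a * mu + lam) * sin u * cosh (a*u) * sin (a*v)
      + (mu - a * lam) * cos u * sinh (a*u) * sin (a*v))
   - sinh v * cos (a*v) * ((a * mu + lam) * cos u * sinh (a*u)
      + (mu - a * lam) * sin u * cosh (a*u))) / (a^2 + 1)

/-- Third coordinate of the helicoidal helicoid with timelike axis. -/
noncomputable def X3 (a lam mu u v : ℝ) : ℝ :=
  lam * u - sinh (a*u) * sin (a*v) / a

/-!
`X1` and `X2` are real parts of functions of two complex variables built from separated products
`f z * g w` with `f'' = c f` and `g'' = -c g`, which `∂²/∂z² + ∂²/∂w²` annihilates: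
`cos z cosh w` (`c = -1`) and `cosh (η z) sin (η w)`, `sinh (η z) sin (η w)` (`c = η²`), where
`η = a + i`, with coefficients `-ω` and `i ω` for `ω = (μ + i λ) / η`. Since the second derivatives
of these entire functions along real lines are the real parts of their complex second derivatives,
`X1` and `X2` are harmonic. `X3` is already such a sum over `ℝ`, with `c = 0` and `c = a²`.
-/

section SecondPartials

variable {𝕜 : Type*} [NontriviallyNormedField 𝕜]

noncomputable def laplacian2 (f : 𝕜 → 𝕜 → 𝕜) (x y : 𝕜) : 𝕜 :=
  deriv (deriv (f · y)) x + deriv (deriv (f x ·)) y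

theorem deriv_deriv_const_mul (c : 𝕜) (f : 𝕜 → 𝕜) (x : 𝕜) :
    deriv (deriv fun z => c * f z) x = c * deriv (deriv f) x := by
  rw [deriv_const_mul_field', deriv_const_mul_field]

theorem deriv_deriv_comp_mul_left (f : 𝕜 → 𝕜) (c x : 𝕜) :
    deriv (deriv fun z => f (c * z)) x = c ^ 2 * deriv (deriv f) (c * x) := by
  have h : deriv (fun z => f (c * z)) = fun z => c * deriv f (c * z) :=
    funext fun z => deriv_comp_mul_left (f := f) c z
  rw [h, deriv_const_mul_field, deriv_comp_mul_left (f := deriv f), smul_eq_mul]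
  ring

theorem deriv_deriv_mul_const_add_mul_const {f g : 𝕜 → 𝕜} (hf : ContDiff 𝕜 2 f)
    (hg : ContDiff 𝕜 2 g) (a b x : 𝕜) :
    deriv (deriv fun z => f z * a + g z * b) x =
      deriv (deriv f) x * a + deriv (deriv g) x * b := by
  have hf₁ := hf.differentiable two_ne_zero
  have hg₁ := hg.differentiable two_ne_zero
  have hf₂ := hf.differentiable_deriv_two
  have hg₂ := hg.differentiable_deriv_two
  have h : deriv (fun z => f z * a + g z * b) = fun z => deriv f z * a + deriv g z * b := by
    funext z
    rw [deriv_fun_add (by fun_prop) (by fun_prop), deriv_mul_const_field, deriv_mul_const_field]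
  rw [h, deriv_fun_add (by fun_prop) (by fun_prop), deriv_mul_const_field, deriv_mul_const_field]

theorem laplacian2_mul_add_mul_eq_zero {f₁ g₁ f₂ g₂ : 𝕜 → 𝕜} {c₁ c₂ : 𝕜}
    (hf₁ : ContDiff 𝕜 2 f₁) (hg₁ : ContDiff 𝕜 2 g₁) (hf₂ : ContDiff 𝕜 2 f₂)
    (hg₂ : ContDiff 𝕜 2 g₂)
    (ef₁ : ∀ x, deriv (deriv f₁) x = c₁ * f₁ x) (eg₁ : ∀ y, deriv (deriv g₁) y = -c₁ * g₁ y)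
    (ef₂ : ∀ x, deriv (deriv f₂) x = c₂ * f₂ x) (eg₂ : ∀ y, deriv (deriv g₂) y = -c₂ * g₂ y)
    (x y : 𝕜) :
    laplacian2 (fun x y => f₁ x * g₁ y + f₂ x * g₂ y) x y = 0 := by
  have hy : (fun y => f₁ x * g₁ y + f₂ x * g₂ y) = fun y => g₁ y * f₁ x + g₂ y * f₂ x := by
    funext y
    ring
  simp only [laplacian2]
  rw [hy, deriv_deriv_mul_const_add_mul_const hf₁ hf₂, deriv_deriv_mul_const_add_mul_const hg₁ hg₂,
    ef₁, ef₂, eg₁, eg₂]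
  ring

end SecondPartials

theorem deriv_deriv_re_comp_ofReal {f : ℂ → ℂ} (hf : Differentiable ℂ f) (x : ℝ) :
    deriv (deriv fun s : ℝ => (f s).re) x = (deriv (deriv f) x).re := by
  have h : deriv (fun s : ℝ => (f s).re) = fun s : ℝ => (deriv f s).re :=
    funext fun s => (hf s).hasDerivAt.real_of_complex.deriv
  rw [h]
  exact (hf.deriv x).hasDerivAt.real_of_complex.deriv

theorem laplacian2_re_comp_ofReal {Φ : ℂ → ℂ → ℂ} (h₁ : ∀ y : ℝ, Differentiable ℂ (Φ · y))
    (h₂ : ∀ x : ℝ, Differentiable ℂ (Φ x ·)) (x y : ℝ) :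
    laplacian2 (fun x y : ℝ => (Φ x y).re) x y = (laplacian2 Φ x y).re := by
  simp only [laplacian2, Complex.add_re]
  rw [deriv_deriv_re_comp_ofReal (h₁ y), deriv_deriv_re_comp_ofReal (h₂ x)]

open Complex in
theorem Complex.cosh_add_mul_I (x y : ℂ) :
    cosh (x + y * I) = cosh x * cos y + sinh x * sin y * I := by
  rw [cosh_add, cosh_mul_I, sinh_mul_I, mul_assoc]

open Complex in
theorem Complex.sinh_add_mul_I (x y : ℂ) :
    sinh (x + y * I) = sinh x * cos y + cosh x * sin y * I := by
  rw [sinh_add, cosh_mul_I, sinh_mul_I, mul_assoc]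

theorem ofReal_add_I_mul_ofReal (a u : ℝ) :
    ((a : ℂ) + Complex.I) * u = ((a * u : ℝ) : ℂ) + u * Complex.I := by
  push_cast
  ring

theorem ofReal_add_mul_I_div_ofReal_add_I (a x y : ℝ) :
    ((x : ℂ) + y * Complex.I) / (a + Complex.I) =
      ((a * x + y) / (a ^ 2 + 1) : ℝ) + ((a * y - x) / (a ^ 2 + 1) : ℝ) * Complex.I := by
  have hne : (a : ℂ) + Complex.I ≠ 0 := fun h => by simpa using congrArg Complex.im h
  rw [div_eq_iff hne]
  apply Complex.ext <;>
    simp only [Complex.add_re, Complex.add_im, Complex.mul_re, Complex.mul_im, Complex.ofReal_re,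
      Complex.ofReal_im, Complex.I_re, Complex.I_im] <;>
    field_simp <;>
    ring

noncomputable def X1ℂ (a lam mu : ℝ) (z w : ℂ) : ℂ :=
  Complex.cos z * Complex.cosh w + -((mu + lam * Complex.I) / (a + Complex.I))
    * Complex.cosh ((a + Complex.I) * z) * Complex.sin ((a + Complex.I) * w)

noncomputable def X2ℂ (a lam mu : ℝ) (z w : ℂ) : ℂ :=
  Complex.sin z * Complex.cosh w + Complex.I * ((mu + lam * Complex.I) / (a + Complex.I))
    * Complex.sinh ((a + Complex.I) * z) * Complex.sin ((a + Complex.I) * w)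

theorem X1_eq_re (a lam mu u v : ℝ) : X1 a lam mu u v = (X1ℂ a lam mu u v).re := by
  rw [X1ℂ, ofReal_add_mul_I_div_ofReal_add_I, ofReal_add_I_mul_ofReal, ofReal_add_I_mul_ofReal,
    Complex.cosh_add_mul_I, Complex.sin_add_mul_I]
  simp only [← Complex.ofReal_cos, ← Complex.ofReal_sin, ← Complex.ofReal_cosh,
    ← Complex.ofReal_sinh, Complex.add_re, Complex.add_im, Complex.mul_re, Complex.mul_im,
    Complex.ofReal_re, Complex.ofReal_im, Complex.I_re, Complex.I_im, Complex.neg_re,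
    Complex.neg_im]
  unfold X1
  field_simp
  ring

theorem X2_eq_re (a lam mu u v : ℝ) : X2 a lam mu u v = (X2ℂ a lam mu u v).re := by
  rw [X2ℂ, ofReal_add_mul_I_div_ofReal_add_I, ofReal_add_I_mul_ofReal, ofReal_add_I_mul_ofReal,
    Complex.sinh_add_mul_I, Complex.sin_add_mul_I]
  simp only [← Complex.ofReal_cos, ← Complex.ofReal_sin, ← Complex.ofReal_cosh,
    ← Complex.ofReal_sinh, Complex.add_re, Complex.add_im, Complex.mul_re, Complex.mul_im,
    Complex.ofReal_re, Complex.ofReal_im, Complex.I_re, Complex.I_im]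
  unfold X2
  field_simp
  ring

theorem laplacian2_X1ℂ (a lam mu : ℝ) (z w : ℂ) : laplacian2 (X1ℂ a lam mu) z w = 0 := by
  refine laplacian2_mul_add_mul_eq_zero (c₁ := -1) (c₂ := (a + Complex.I) ^ 2) (by fun_prop)
    (by fun_prop) (by fun_prop) (by fun_prop) (fun x => ?_) (fun y => ?_) (fun x => ?_)
    (fun y => ?_) z w
  · simp [Complex.deriv_cos']
  · simp [Complex.deriv_cosh, Complex.deriv_sinh]
  · rw [deriv_deriv_const_mul, deriv_deriv_comp_mul_left, Complex.deriv_cosh, Complex.deriv_sinh]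
    ring
  · rw [deriv_deriv_comp_mul_left]
    simp [Complex.deriv_cos', Complex.deriv_sin]

theorem laplacian2_X2ℂ (a lam mu : ℝ) (z w : ℂ) : laplacian2 (X2ℂ a lam mu) z w = 0 := by
  refine laplacian2_mul_add_mul_eq_zero (c₁ := -1) (c₂ := (a + Complex.I) ^ 2) (by fun_prop)
    (by fun_prop) (by fun_prop) (by fun_prop) (fun x => ?_) (fun y => ?_) (fun x => ?_)
    (fun y => ?_) z w
  · simp [Complex.deriv_cos', Complex.deriv_sin]
  · simp [Complex.deriv_cosh, Complex.deriv_sinh]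
  · rw [deriv_deriv_const_mul, deriv_deriv_comp_mul_left, Complex.deriv_sinh, Complex.deriv_cosh]
    ring
  · rw [deriv_deriv_comp_mul_left]
    simp [Complex.deriv_cos', Complex.deriv_sin]

theorem laplacian2_X1 (a lam mu u v : ℝ) : laplacian2 (X1 a lam mu) u v = 0 := by
  rw [show X1 a lam mu = fun u v : ℝ => (X1ℂ a lam mu u v).re from funext₂ (X1_eq_re a lam mu),
    laplacian2_re_comp_ofReal (by unfold X1ℂ; fun_prop) (by unfold X1ℂ; fun_prop),
    laplacian2_X1ℂ, Complex.zero_re]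

theorem laplacian2_X2 (a lam mu u v : ℝ) : laplacian2 (X2 a lam mu) u v = 0 := by
  rw [show X2 a lam mu = fun u v : ℝ => (X2ℂ a lam mu u v).re from funext₂ (X2_eq_re a lam mu),
    laplacian2_re_comp_ofReal (by unfold X2ℂ; fun_prop) (by unfold X2ℂ; fun_prop),
    laplacian2_X2ℂ, Complex.zero_re]

theorem laplacian2_X3 (a lam mu u v : ℝ) : laplacian2 (X3 a lam mu) u v = 0 := by
  have hX3 : X3 a lam mu = fun u v => lam * u * 1 + -a⁻¹ * sinh (a * u) * sin (a * v) := by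
    funext u v
    unfold X3
    ring
  rw [hX3]
  refine laplacian2_mul_add_mul_eq_zero (c₁ := 0) (c₂ := a ^ 2) (by fun_prop) (by fun_prop)
    (by fun_prop) (by fun_prop) (fun x => ?_) (fun y => ?_) (fun x => ?_) (fun y => ?_) u v
  · simp
  · simp
  · rw [deriv_deriv_const_mul, deriv_deriv_comp_mul_left, Real.deriv_sinh, Real.deriv_cosh]
    ring
  · rw [deriv_deriv_comp_mul_left]
    simp [Real.deriv_cos', Real.deriv_sin]

theorem helicoidal_helicoid_timelike_harmonic_general (a lam mu : ℝ) (u v : ℝ) :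
    deriv (deriv (fun s => X1 a lam mu s v)) u + deriv (deriv (fun t => X1 a lam mu u t)) v = 0 ∧
    deriv (deriv (fun s => X2 a lam mu s v)) u + deriv (deriv (fun t => X2 a lam mu u t)) v = 0 ∧
    deriv (deriv (fun s => X3 a lam mu s v)) u + deriv (deriv (fun t => X3 a lam mu u t)) v = 0 :=
  ⟨laplacian2_X1 a lam mu u v, laplacian2_X2 a lam mu u v, laplacian2_X3 a lam mu u v⟩

/-- Each coordinate function of the helicoidal helicoid with timelike axis is harmonic. -/
theorem helicoidal_helicoid_timelike_harmonic (a lam mu : ℝ)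
    (hlam0 : 0 < lam) (hlam1 : lam < 1) (hmu : mu = Real.sqrt (1 - lam^2))
    (ha : 0 < a) (u v : ℝ) :
    deriv (deriv (fun s => X1 a lam mu s v)) u + deriv (deriv (fun t => X1 a lam mu u t)) v = 0 ∧
    deriv (deriv (fun s => X2 a lam mu s v)) u + deriv (deriv (fun t => X2 a lam mu u t)) v = 0 ∧
    deriv (deriv (fun s => X3 a lam mu s v)) u + deriv (deriv (fun t => X3 a lam mu u t)) v = 0 :=
  helicoidal_helicoid_timelike_harmonic_general a lam mu u v
end

section
/- Let 0 < λ < 1, μ = √(1−λ²), a > 0, and define X : ℝ² → ℝ³ by X(u,v) = ( [cosh v·((a²+1)·cos u − (μ − aλ)·sin u·sinh(a u)·sin(a v) − (aμ + λ)·cos u·cosh(a u)·sin(a v)) + sinh v·cos(a v)·((aμ + λ)·sin u·sinh(a u) − (μ − aλ)·cos u·cosh(a u))]/(a²+1) , [cosh v·((a²+1)·sin u − (aμ + λ)·sin u·cosh(a u)·sin(a v) + (μ − aλ)·cos u·sinh(a u)·sin(a v)) − sinh v·cos(a v)·((aμ + λ)·cos u·sinh(a u) + (μ − aλ)·sin u·cosh(a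 u))]/(a²+1) , λ·u − sinh(a u)·sin(a v)/a ). Then X is Lorentz-conformal: for all (u,v) ∈ ℝ², ⟨X_u, X_u⟩_L = ⟨X_v, X_v⟩_L and ⟨X_u, X_v⟩_L = 0. -/
/-!
Writing `X(u, v)` as the rotation `R_u` by angle `u` about the timelike axis of the vector
`F = (frameX1, frameX2, X3)`, the tangent vectors become `X_u = R_u (∂_u F + J F)` and
`X_v = R_u (∂_v F)`, where `J` is the quarter turn in the spacelike plane. In this rotating
frame the factors `a² + 1` cancel, since `a (aμ + λ) + (μ - aλ) = μ (a² + 1)` and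
`(aμ + λ) - a (μ - aλ) = λ (a² + 1)`. Rotations about the timelike axis are Lorentz
isometries, so conformality reduces to two polynomial identities in
`cosh v, sinh v, cosh au, sinh au, sin av, cos av, λ, μ`, which hold modulo the Pythagorean
relations and `λ² + μ² = 1`.
-/

open Real

/-- Lorentzian inner product on ℝ³: ⟨p,q⟩ = p₁q₁ + p₂q₂ − p₃q₃. -/
noncomputable def lorentz (p q : ℝ × ℝ × ℝ) : ℝ :=
  p.1 * q.1 + p.2.1 * q.2.1 - p.2.2 * q.2.2

/-- Partial derivative of X with respect to u. -/
noncomputable def Xu (a lam mu u v : ℝ) : ℝ × ℝ × ℝ :=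
  (deriv (fun s => X1 a lam mu s v) u, deriv (fun s => X2 a lam mu s v) u,
   deriv (fun s => X3 a lam mu s v) u)

/-- Partial derivative of X with respect to v. -/
noncomputable def Xv (a lam mu u v : ℝ) : ℝ × ℝ × ℝ :=
  (deriv (fun t => X1 a lam mu u t) v, deriv (fun t => X2 a lam mu u t) v,
   deriv (fun t => X3 a lam mu u t) v)

noncomputable def rotZ (θ : ℝ) (p : ℝ × ℝ × ℝ) : ℝ × ℝ × ℝ :=
  (cos θ * p.1 - sin θ * p.2.1, sin θ * p.1 + cos θ * p.2.1, p.2.2)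

theorem lorentz_rotZ (θ : ℝ) (p q : ℝ × ℝ × ℝ) :
    lorentz (rotZ θ p) (rotZ θ q) = lorentz p q := by
  simp only [lorentz, rotZ]
  linear_combination (p.1 * q.1 + p.2.1 * q.2.1) * sin_sq_add_cos_sq θ

section RotatingFrame

variable {f g : ℝ → ℝ} {f' g' x : ℝ}

theorem HasDerivAt.cos_mul_sub_sin_mul (hf : HasDerivAt f f' x) (hg : HasDerivAt g g' x) :
    HasDerivAt (fun s => Real.cos s * f s - Real.sin s * g s)
      (Real.cos x * (f' - g x) - Real.sin x * (g' + f x)) x :=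
  (((hasDerivAt_cos x).mul hf).sub ((hasDerivAt_sin x).mul hg)).congr_deriv (by ring)

theorem HasDerivAt.sin_mul_add_cos_mul (hf : HasDerivAt f f' x) (hg : HasDerivAt g g' x) :
    HasDerivAt (fun s => Real.sin s * f s + Real.cos s * g s)
      (Real.sin x * (f' - g x) + Real.cos x * (g' + f x)) x :=
  (((hasDerivAt_sin x).mul hf).add ((hasDerivAt_cos x).mul hg)).congr_deriv (by ring)

end RotatingFrame

theorem hasDerivAt_sinh_const_mul (a x : ℝ) :
    HasDerivAt (fun s => sinh (a * s)) (a * cosh (a * x)) x :=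
  ((hasDerivAt_id' x).const_mul a).sinh.congr_deriv (by ring)

theorem hasDerivAt_cosh_const_mul (a x : ℝ) :
    HasDerivAt (fun s => cosh (a * s)) (a * sinh (a * x)) x :=
  ((hasDerivAt_id' x).const_mul a).cosh.congr_deriv (by ring)

theorem hasDerivAt_sin_const_mul (a x : ℝ) :
    HasDerivAt (fun s => sin (a * s)) (a * cos (a * x)) x :=
  ((hasDerivAt_id' x).const_mul a).sin.congr_deriv (by ring)

theorem hasDerivAt_cos_const_mul (a x : ℝ) :
    HasDerivAt (fun s => cos (a * s)) (-(a * sin (a * x))) x :=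
  ((hasDerivAt_id' x).const_mul a).cos.congr_deriv (by ring)

section Helicoid

variable (a lam mu : ℝ)

noncomputable def frameX1 (u v : ℝ) : ℝ :=
  cosh v - cosh (a*u) * ((a * mu + lam) * cosh v * sin (a*v)
    + (mu - a * lam) * sinh v * cos (a*v)) / (a^2 + 1)

noncomputable def frameX2 (u v : ℝ) : ℝ :=
  sinh (a*u) * ((mu - a * lam) * cosh v * sin (a*v)
    - (a * mu + lam) * sinh v * cos (a*v)) / (a^2 + 1)

noncomputable def frameXu (u v : ℝ) : ℝ × ℝ × ℝ :=
  (-(sinh (a*u) * (mu * cosh v * sin (a*v) - lam * sinh v * cos (a*v))),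
   cosh v - cosh (a*u) * (lam * cosh v * sin (a*v) + mu * sinh v * cos (a*v)),
   lam - cosh (a*u) * sin (a*v))

noncomputable def frameXv (u v : ℝ) : ℝ × ℝ × ℝ :=
  (sinh v - cosh (a*u) * (lam * sinh v * sin (a*v) + mu * cosh v * cos (a*v)),
   sinh (a*u) * (mu * sinh v * sin (a*v) - lam * cosh v * cos (a*v)),
   -(sinh (a*u) * cos (a*v)))

variable (u v : ℝ)

theorem X1_eq_frame :
    X1 a lam mu u v = cos u * frameX1 a lam mu u v - sin u * frameX2 a lam mu u v := by
  have hD : a^2 + 1 ≠ 0 := by positivity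
  simp only [X1, frameX1, frameX2]
  field_simp
  ring

theorem X2_eq_frame :
    X2 a lam mu u v = sin u * frameX1 a lam mu u v + cos u * frameX2 a lam mu u v := by
  have hD : a^2 + 1 ≠ 0 := by positivity
  simp only [X2, frameX2, frameX1]
  field_simp
  ring

theorem hasDerivAt_frameX1_u :
    HasDerivAt (fun s => frameX1 a lam mu s v)
      ((frameXu a lam mu u v).1 + frameX2 a lam mu u v) u := by
  have hD : a^2 + 1 ≠ 0 := by positivity
  refine ((((hasDerivAt_cosh_const_mul a u).mul_const _).div_const (a^2 + 1)).const_sub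
    (cosh v)).congr_deriv ?_
  simp only [frameXu, frameX2]
  field_simp
  ring

theorem hasDerivAt_frameX2_u :
    HasDerivAt (fun s => frameX2 a lam mu s v)
      ((frameXu a lam mu u v).2.1 - frameX1 a lam mu u v) u := by
  have hD : a^2 + 1 ≠ 0 := by positivity
  refine (((hasDerivAt_sinh_const_mul a u).mul_const _).div_const (a^2 + 1)).congr_deriv ?_
  simp only [frameXu, frameX1]
  field_simp
  ring

theorem hasDerivAt_X3_u (ha : a ≠ 0) :
    HasDerivAt (fun s => X3 a lam mu s v) (frameXu a lam mu u v).2.2 u := by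
  refine (((hasDerivAt_id' u).const_mul lam).sub
    (((hasDerivAt_sinh_const_mul a u).mul_const (sin (a*v))).div_const a)).congr_deriv ?_
  simp only [frameXu]
  field_simp

theorem hasDerivAt_frameX1_v :
    HasDerivAt (fun t => frameX1 a lam mu u t) (frameXv a lam mu u v).1 v := by
  have hD : a^2 + 1 ≠ 0 := by positivity
  have hinner := (((hasDerivAt_cosh v).const_mul (a * mu + lam)).mul
    (hasDerivAt_sin_const_mul a v)).add
      (((hasDerivAt_sinh v).const_mul (mu - a * lam)).mul (hasDerivAt_cos_const_mul a v))
  refine ((hasDerivAt_cosh v).sub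
    ((hinner.const_mul (cosh (a*u))).div_const (a^2 + 1))).congr_deriv ?_
  simp only [frameXv]
  field_simp
  ring

theorem hasDerivAt_frameX2_v :
    HasDerivAt (fun t => frameX2 a lam mu u t) (frameXv a lam mu u v).2.1 v := by
  have hD : a^2 + 1 ≠ 0 := by positivity
  have hinner := (((hasDerivAt_cosh v).const_mul (mu - a * lam)).mul
    (hasDerivAt_sin_const_mul a v)).sub
      (((hasDerivAt_sinh v).const_mul (a * mu + lam)).mul (hasDerivAt_cos_const_mul a v))
  refine ((hinner.const_mul (sinh (a*u))).div_const (a^2 + 1)).congr_deriv ?_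
  simp only [frameXv]
  field_simp
  ring

theorem hasDerivAt_X3_v (ha : a ≠ 0) :
    HasDerivAt (fun t => X3 a lam mu u t) (frameXv a lam mu u v).2.2 v := by
  refine ((hasDerivAt_const v (lam * u)).sub
    (((hasDerivAt_sin_const_mul a v).const_mul (sinh (a*u))).div_const a)).congr_deriv ?_
  simp only [frameXv]
  field_simp
  ring

theorem Xu_eq_rotZ (ha : a ≠ 0) : Xu a lam mu u v = rotZ u (frameXu a lam mu u v) := by
  have h1 := (hasDerivAt_frameX1_u a lam mu u v).cos_mul_sub_sin_mul
    (hasDerivAt_frameX2_u a lam mu u v)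
  have h2 := (hasDerivAt_frameX1_u a lam mu u v).sin_mul_add_cos_mul
    (hasDerivAt_frameX2_u a lam mu u v)
  simp only [Xu, X1_eq_frame, X2_eq_frame]
  rw [h1.deriv, h2.deriv, (hasDerivAt_X3_u a lam mu u v ha).deriv]
  simp only [rotZ, add_sub_cancel_right, sub_add_cancel]

theorem Xv_eq_rotZ (ha : a ≠ 0) : Xv a lam mu u v = rotZ u (frameXv a lam mu u v) := by
  have h1 : HasDerivAt (fun t => cos u * frameX1 a lam mu u t - sin u * frameX2 a lam mu u t)
      (rotZ u (frameXv a lam mu u v)).1 v :=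
    ((hasDerivAt_frameX1_v a lam mu u v).const_mul (cos u)).sub
      ((hasDerivAt_frameX2_v a lam mu u v).const_mul (sin u))
  have h2 : HasDerivAt (fun t => sin u * frameX1 a lam mu u t + cos u * frameX2 a lam mu u t)
      (rotZ u (frameXv a lam mu u v)).2.1 v :=
    ((hasDerivAt_frameX1_v a lam mu u v).const_mul (sin u)).add
      ((hasDerivAt_frameX2_v a lam mu u v).const_mul (cos u))
  simp only [Xv, X1_eq_frame, X2_eq_frame]
  rw [h1.deriv, h2.deriv, (hasDerivAt_X3_v a lam mu u v ha).deriv]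
  rfl

theorem lorentz_frameXu_self_eq (hlm : lam^2 + mu^2 = 1) :
    lorentz (frameXu a lam mu u v) (frameXu a lam mu u v)
      = lorentz (frameXv a lam mu u v) (frameXv a lam mu u v) := by
  simp only [lorentz, frameXu, frameXv]
  linear_combination
    (sinh (a*u)^2 * (mu^2 * sin (a*v)^2 - lam^2 * cos (a*v)^2) + 1
      - 2 * lam * cosh (a*u) * sin (a*v)
      + cosh (a*u)^2 * (lam^2 * sin (a*v)^2 - mu^2 * cos (a*v)^2)) * cosh_sq_sub_sinh_sq v
    - mu^2 * cosh_sq_sub_sinh_sq (a*u)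
    + mu^2 * (sinh (a*u)^2 - cosh (a*u)^2) * sin_sq_add_cos_sq (a*v)
    + (cosh (a*u)^2 * sin (a*v)^2 - sinh (a*u)^2 * cos (a*v)^2 - 1) * hlm

theorem lorentz_frameXu_frameXv (hlm : lam^2 + mu^2 = 1) :
    lorentz (frameXu a lam mu u v) (frameXv a lam mu u v) = 0 := by
  simp only [lorentz, frameXu, frameXv]
  linear_combination
    sinh (a*u) * cos (a*v) * (cosh (a*u) * sin (a*v) * (lam^2 + mu^2) - lam)
      * cosh_sq_sub_sinh_sq v
    + sinh (a*u) * cosh (a*u) * sin (a*v) * cos (a*v) * hlm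

end Helicoid

/-- The helicoidal helicoid with timelike axis is Lorentz-conformal. -/
theorem helicoidal_helicoid_timelike_conformal (a lam mu : ℝ)
    (hlam0 : 0 < lam) (hlam1 : lam < 1) (hmu : mu = Real.sqrt (1 - lam^2))
    (ha : 0 < a) (u v : ℝ) :
    lorentz (Xu a lam mu u v) (Xu a lam mu u v) = lorentz (Xv a lam mu u v) (Xv a lam mu u v) ∧
    lorentz (Xu a lam mu u v) (Xv a lam mu u v) = 0 := by
  have hlm : lam^2 + mu^2 = 1 := by
    rw [hmu, sq_sqrt (by nlinarith)]
    ring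
  rw [Xu_eq_rotZ a lam mu u v ha.ne', Xv_eq_rotZ a lam mu u v ha.ne', lorentz_rotZ, lorentz_rotZ,
    lorentz_rotZ]
  exact ⟨lorentz_frameXu_self_eq a lam mu u v hlm, lorentz_frameXu_frameXv a lam mu u v hlm⟩
end

section
/- Let 0 < λ < 1, μ = √(1−λ²), a > 0, and let X : ℝ² → ℝ³ be defined by X(u,v) = ( [cosh v·((a²+1)·cos u − (μ − aλ)·sin u·sinh(a u)·sin(a v) − (aμ + λ)·cos u·cosh(a u)·sin(a v)) + sinh v·cos(a v)·((aμ + λ)·sin u·sinh(a u) − (μ − aλ)·cos u·cosh(a u))]/(a²+1) , [cosh v·((a²+1)·sin u − (aμ + λ)·sin u·cosh(a u)·sin(a v) + (μ − aλ)·cos u·sinh(a u)·sin(a v)) − sinh v·cos(a v)·((aμ + λ)·cos u·sinh(a u) + (μ − aλ)·sin u·cosh(a u))]/(a²+1) , λ·u − sinh(a u)·sin(a v)/a ). Then for every u ∈ ℝ: (i) X(u,0) = (cos u, sin u, λ·u); and (ii) the vector V(u) = ( (λ/μ)·sin u·cosh(a u) − cos u·sinh(a u) , −(λ/μ)·cos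 u·cosh(a u) − sin u·sinh(a u) , −cosh(a u)/μ ) satisfies ⟨V(u),V(u)⟩_L = −1, ⟨V(u), ∂X/∂u (u,0)⟩_L = 0 and ⟨V(u), ∂X/∂v (u,0)⟩_L = 0. -/
open Real

/-- The Björling data normal field. -/
noncomputable def V (a lam mu u : ℝ) : ℝ × ℝ × ℝ :=
  ((lam / mu) * sin u * cosh (a*u) - cos u * sinh (a*u),
   -(lam / mu) * cos u * cosh (a*u) - sin u * sinh (a*u),
   - cosh (a*u) / mu)

/-!
Along the helix `(cos u, sin u, λu)` the tangent `T`, the spacelike principal normal `n` and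
the timelike binormal `b` form a Lorentzian Frenet frame: they are pairwise orthogonal, with
`⟨n,n⟩ = 1` and `⟨b,b⟩ = -1`. The normal field is the hyperbolic rotation
`V = sinh(au) n + cosh(au) b` of `b`, and differentiating in `v` at `v = 0` gives
`X_v(u,0) = μ (cosh(au) n + sinh(au) b)`, the rotation of `n` by the same angle. Hyperbolic
rotations preserve the Lorentzian product, so `V` is unit timelike and orthogonal to both
`X_u(u,0) = T` and `X_v(u,0)`.
-/

lemma lorentz_comm (p q : ℝ × ℝ × ℝ) : lorentz p q = lorentz q p := by
  simp only [lorentz]; ring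

lemma lorentz_add_left (p q r : ℝ × ℝ × ℝ) : lorentz (p + q) r = lorentz p r + lorentz q r := by
  simp only [lorentz, Prod.fst_add, Prod.snd_add]; ring

lemma lorentz_smul_left (c : ℝ) (p q : ℝ × ℝ × ℝ) : lorentz (c • p) q = c * lorentz p q := by
  simp only [lorentz, Prod.smul_fst, Prod.smul_snd, smul_eq_mul]; ring

lemma lorentz_add_right (p q r : ℝ × ℝ × ℝ) : lorentz p (q + r) = lorentz p q + lorentz p r := by
  rw [lorentz_comm, lorentz_add_left, lorentz_comm q, lorentz_comm r]

lemma lorentz_smul_right (c : ℝ) (p q : ℝ × ℝ × ℝ) : lorentz p (c • q) = c * lorentz p q := by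
  rw [lorentz_comm, lorentz_smul_left, lorentz_comm]

section HyperbolicRotation

variable {n b : ℝ × ℝ × ℝ}

lemma lorentz_sinh_smul_add_cosh_smul_self (hn : lorentz n n = 1) (hb : lorentz b b = -1)
    (hnb : lorentz n b = 0) (θ : ℝ) :
    lorentz (sinh θ • n + cosh θ • b) (sinh θ • n + cosh θ • b) = -1 := by
  simp only [lorentz_add_left, lorentz_add_right, lorentz_smul_left, lorentz_smul_right,
    lorentz_comm b n, hn, hb, hnb]
  linear_combination -cosh_sq_sub_sinh_sq θ

lemma lorentz_sinh_smul_add_cosh_smul_cosh_smul_add_sinh_smul (hn : lorentz n n = 1)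
    (hb : lorentz b b = -1) (hnb : lorentz n b = 0) (θ : ℝ) :
    lorentz (sinh θ • n + cosh θ • b) (cosh θ • n + sinh θ • b) = 0 := by
  simp only [lorentz_add_left, lorentz_add_right, lorentz_smul_left, lorentz_smul_right,
    lorentz_comm b n, hn, hb, hnb]
  ring

end HyperbolicRotation

section HelixFrame

variable (lam mu u : ℝ)

noncomputable def helixTangent : ℝ × ℝ × ℝ := (-sin u, cos u, lam)

noncomputable def helixNormal : ℝ × ℝ × ℝ := (-cos u, -sin u, 0)

noncomputable def helixBinormal : ℝ × ℝ × ℝ := mu⁻¹ • (lam * sin u, -(lam * cos u), -1)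

lemma lorentz_helixNormal_self : lorentz (helixNormal u) (helixNormal u) = 1 := by
  simp only [lorentz, helixNormal]
  linear_combination cos_sq_add_sin_sq u

lemma lorentz_helixBinormal_self (hmu : mu ≠ 0) (hlam_mu : lam ^ 2 + mu ^ 2 = 1) :
    lorentz (helixBinormal lam mu u) (helixBinormal lam mu u) = -1 := by
  simp only [lorentz, helixBinormal, Prod.smul_mk, smul_eq_mul]
  field_simp
  linear_combination lam ^ 2 * sin_sq_add_cos_sq u + hlam_mu

lemma lorentz_helixNormal_helixBinormal :
    lorentz (helixNormal u) (helixBinormal lam mu u) = 0 := by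
  simp only [lorentz, helixNormal, helixBinormal, Prod.smul_mk, smul_eq_mul]
  ring

lemma lorentz_helixNormal_helixTangent : lorentz (helixNormal u) (helixTangent lam u) = 0 := by
  simp only [lorentz, helixNormal, helixTangent]
  ring

lemma lorentz_helixBinormal_helixTangent :
    lorentz (helixBinormal lam mu u) (helixTangent lam u) = 0 := by
  simp only [lorentz, helixBinormal, helixTangent, Prod.smul_mk, smul_eq_mul]
  linear_combination -(mu⁻¹ * lam) * sin_sq_add_cos_sq u

end HelixFrame

/-- To first order at `t = 0`, `cosh t ≈ 1`, `sinh t ≈ t`, `sin (a t) ≈ a t` and `cos (a t) ≈ 1`. -/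
lemma hasDerivAt_cosh_mul_sub_sin_add_sinh_mul_cos (a K₁ K₂ K₃ : ℝ) :
    HasDerivAt (fun t => cosh t * (K₁ - K₂ * sin (a * t)) + sinh t * cos (a * t) * K₃)
      (K₃ - a * K₂) 0 := by
  have hat : HasDerivAt (fun t : ℝ => a * t) a 0 := hasDerivAt_const_mul a
  have H := ((hasDerivAt_cosh 0).mul ((hasDerivAt_const 0 K₁).sub (hat.sin.const_mul K₂))).add
    (((hasDerivAt_sinh 0).mul hat.cos).mul_const K₃)
  refine H.congr_deriv ?_
  simp only [cosh_zero, sinh_zero, mul_zero, sin_zero, cos_zero]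
  ring

section HelicoidAlongHelix

variable (a lam mu u : ℝ)

lemma X1_v_zero : X1 a lam mu u 0 = cos u := by
  simp only [X1, cosh_zero, sinh_zero, mul_zero, sin_zero]
  field_simp
  ring

lemma X2_v_zero : X2 a lam mu u 0 = sin u := by
  simp only [X2, cosh_zero, sinh_zero, mul_zero, sin_zero]
  field_simp
  ring

lemma X3_v_zero : X3 a lam mu u 0 = lam * u := by
  simp [X3]

lemma Xu_v_zero : Xu a lam mu u 0 = helixTangent lam u := by
  simp only [Xu, X1_v_zero, X2_v_zero, X3_v_zero, helixTangent]
  simp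

lemma hasDerivAt_X1_v_zero :
    HasDerivAt (X1 a lam mu u) (lam * sin u * sinh (a * u) - mu * cos u * cosh (a * u)) 0 := by
  have h := (hasDerivAt_cosh_mul_sub_sin_add_sinh_mul_cos a ((a ^ 2 + 1) * cos u)
    ((mu - a * lam) * sin u * sinh (a * u) + (a * mu + lam) * cos u * cosh (a * u))
    ((a * mu + lam) * sin u * sinh (a * u) - (mu - a * lam) * cos u * cosh (a * u))).div_const
    (a ^ 2 + 1)
  refine (h.congr_deriv ?_).congr_of_eventuallyEq (.of_forall fun t => ?_)
  · field_simp
    ring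
  · simp only [X1]
    ring

lemma hasDerivAt_X2_v_zero :
    HasDerivAt (X2 a lam mu u) (-(mu * sin u * cosh (a * u)) - lam * cos u * sinh (a * u)) 0 := by
  have h := (hasDerivAt_cosh_mul_sub_sin_add_sinh_mul_cos a ((a ^ 2 + 1) * sin u)
    ((a * mu + lam) * sin u * cosh (a * u) - (mu - a * lam) * cos u * sinh (a * u))
    (-((a * mu + lam) * cos u * sinh (a * u) + (mu - a * lam) * sin u * cosh (a * u)))).div_const
    (a ^ 2 + 1)
  refine (h.congr_deriv ?_).congr_of_eventuallyEq (.of_forall fun t => ?_)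
  · field_simp
    ring
  · simp only [X2]
    ring

lemma hasDerivAt_X3_v_zero : HasDerivAt (X3 a lam mu u) (-sinh (a * u)) 0 := by
  rcases eq_or_ne a 0 with rfl | ha
  -- at `a = 0` the junk division `/ 0` makes `X3` constant in `v`, and `sinh 0 = 0`
  · refine ((hasDerivAt_const (0 : ℝ) (lam * u)).congr_of_eventuallyEq
      (.of_forall fun t => ?_)).congr_deriv ?_ <;> simp [X3]
  have hat : HasDerivAt (fun t : ℝ => a * t) a 0 := hasDerivAt_const_mul a
  have h := (hasDerivAt_const 0 (lam * u)).sub ((hat.sin.const_mul (sinh (a * u))).div_const a)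
  refine h.congr_deriv ?_
  field_simp
  simp

lemma Xv_v_zero (hmu : mu ≠ 0) :
    Xv a lam mu u 0 =
      mu • (cosh (a * u) • helixNormal u + sinh (a * u) • helixBinormal lam mu u) := by
  rw [Xv, (hasDerivAt_X1_v_zero a lam mu u).deriv, (hasDerivAt_X2_v_zero a lam mu u).deriv,
    (hasDerivAt_X3_v_zero a lam mu u).deriv]
  simp only [helixNormal, helixBinormal, Prod.smul_mk, Prod.mk_add_mk, smul_eq_mul, Prod.mk.injEq]
  refine ⟨?_, ?_, ?_⟩ <;> field_simp <;> ring

lemma V_eq_sinh_smul_add_cosh_smul :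
    V a lam mu u = sinh (a * u) • helixNormal u + cosh (a * u) • helixBinormal lam mu u := by
  simp only [V, helixNormal, helixBinormal, Prod.smul_mk, Prod.mk_add_mk, smul_eq_mul,
    Prod.mk.injEq]
  refine ⟨?_, ?_, ?_⟩ <;> ring

end HelicoidAlongHelix

theorem helicoidal_helicoid_timelike_bjorling_general (a lam mu : ℝ)
    (hlam0 : 0 < lam) (hlam1 : lam < 1) (hmu : mu = Real.sqrt (1 - lam^2))
    (u : ℝ) :
    (X1 a lam mu u 0, X2 a lam mu u 0, X3 a lam mu u 0) = (cos u, sin u, lam * u) ∧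
    lorentz (V a lam mu u) (V a lam mu u) = -1 ∧
    lorentz (V a lam mu u) (Xu a lam mu u 0) = 0 ∧
    lorentz (V a lam mu u) (Xv a lam mu u 0) = 0 := by
  have hlam_sq : 0 < 1 - lam ^ 2 := by nlinarith
  have hmu0 : mu ≠ 0 := hmu ▸ (Real.sqrt_pos.2 hlam_sq).ne'
  have hlam_mu : lam ^ 2 + mu ^ 2 = 1 := by rw [hmu, Real.sq_sqrt hlam_sq.le]; ring
  have hn := lorentz_helixNormal_self u
  have hb := lorentz_helixBinormal_self lam mu u hmu0 hlam_mu
  have hnb := lorentz_helixNormal_helixBinormal lam mu u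
  rw [X1_v_zero, X2_v_zero, X3_v_zero, Xu_v_zero, Xv_v_zero a lam mu u hmu0,
    V_eq_sinh_smul_add_cosh_smul]
  refine ⟨rfl, lorentz_sinh_smul_add_cosh_smul_self hn hb hnb _, ?_, ?_⟩
  · simp only [lorentz_add_left, lorentz_smul_left, lorentz_helixNormal_helixTangent,
      lorentz_helixBinormal_helixTangent, mul_zero, add_zero]
  · rw [lorentz_smul_right, lorentz_sinh_smul_add_cosh_smul_cosh_smul_add_sinh_smul hn hb hnb,
      mul_zero]

/-- The helicoidal helicoid with timelike axis contains the helix (cos u, sin u, λu) and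
V(u) is a unit timelike vector field normal to the surface along it. -/
theorem helicoidal_helicoid_timelike_bjorling (a lam mu : ℝ)
    (hlam0 : 0 < lam) (hlam1 : lam < 1) (hmu : mu = Real.sqrt (1 - lam^2))
    (ha : 0 < a) (u : ℝ) :
    (X1 a lam mu u 0, X2 a lam mu u 0, X3 a lam mu u 0) = (cos u, sin u, lam * u) ∧
    lorentz (V a lam mu u) (V a lam mu u) = -1 ∧
    lorentz (V a lam mu u) (Xu a lam mu u 0) = 0 ∧
    lorentz (V a lam mu u) (Xv a lam mu u 0) = 0 :=
  helicoidal_helicoid_timelike_bjorling_general a lam mu hlam0 hlam1 hmu u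
end
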